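/- arXiv:0707.0224 — 2 statements merged into one kernel-verified Lean document; each statement's English description precedes it below -/
import Mathlib

section
/- Let G be a finite simple graph containing a triangle v₁v₂v₃ such that v₂ and v₃ have degree two in G and v₁ is a stem (i.e., v₁ is adjacent to some vertex u of degree one). Then G has two star-factors with different numbers of edges. -/
open SimpleGraph

/-- `S` is a star-factor of `G`: a spanning subgraph (as a `SimpleGraph` on the same
vertex set with `S ≤ G`) in which every vertex has a neighbor and every edge has an
endpoint of degree one, i.e. every connected component is a star `K_{1,n}`, `n ≥ 1`. -/
def IsStarFactor {V : Type*} (G S : SimpleGraph V) : Prop :=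
  S ≤ G ∧ (∀ v, ∃ u, S.Adj v u) ∧
    ∀ ⦃u v⦄, S.Adj u v → (∀ w, S.Adj u w → w = v) ∨ (∀ w, S.Adj v w → w = u)

/-- the "every edge has an endpoint of degree one" condition -/
private def StarCond {V : Type*} (S : SimpleGraph V) : Prop :=
  ∀ ⦃u v⦄, S.Adj u v → (∀ w, S.Adj u w → w = v) ∨ (∀ w, S.Adj v w → w = u)

private lemma exchange_step {V : Type*} [Fintype V] (G S : SimpleGraph V)
    (hle : S ≤ G) (hcond : StarCond S) {w : V} (hw : ∀ c, ¬ S.Adj w c)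
    {x : V} (hwx : G.Adj w x) :
    ∃ S' : SimpleGraph V, S' ≤ G ∧ StarCond S' ∧
      {v | ∀ c, ¬ S'.Adj v c} ⊂ {v | ∀ c, ¬ S.Adj v c} := by
  classical
  have hwne : w ≠ x := hwx.ne
  by_cases hc : ∀ z, S.Adj x z → ∀ y, S.Adj z y → y = x
  · -- x is "center-like" (or uncovered): just add the edge w-x
    refine ⟨S ⊔ fromEdgeSet {s(w, x)}, ?_, ?_, ?_⟩
    · refine sup_le hle ?_
      intro a b hab
      rw [fromEdgeSet_adj, Set.mem_singleton_iff, Sym2.eq_iff] at hab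
      rcases hab.1 with ⟨rfl, rfl⟩ | ⟨rfl, rfl⟩
      · exact hwx
      · exact hwx.symm
    · have hadj : ∀ a b, (S ⊔ fromEdgeSet {s(w, x)}).Adj a b ↔
          S.Adj a b ∨ ((a = w ∧ b = x) ∨ (a = x ∧ b = w)) := by
        intro a b
        simp only [sup_adj, fromEdgeSet_adj, Set.mem_singleton_iff, Sym2.eq_iff]
        constructor
        · rintro (h | ⟨h, -⟩)
          · exact Or.inl h
          · exact Or.inr h
        · rintro (h | h)
          · exact Or.inl h
          · refine Or.inr ⟨h, ?_⟩
            rcases h with ⟨rfl, rfl⟩ | ⟨rfl, rfl⟩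
            · exact hwne
            · exact hwne.symm
      intro a b hab
      rw [hadj] at hab
      rcases hab with hab | ⟨rfl, rfl⟩ | ⟨rfl, rfl⟩
      · -- old edge; `a ≠ w` and `b ≠ w`
        have haw : a ≠ w := fun h => hw b (h ▸ hab)
        have hbw : b ≠ w := fun h => hw a (h ▸ hab.symm)
        by_cases hax : a = x
        · subst hax
          refine Or.inr fun c hc' => ?_
          rw [hadj] at hc'
          rcases hc' with hc' | ⟨rfl, -⟩ | ⟨hbx, -⟩
          · exact hc _ hab _ hc'
          · exact absurd rfl hbw
          · exact absurd hbx hab.ne'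
        · by_cases hbx : b = x
          · subst hbx
            refine Or.inl fun c hc' => ?_
            rw [hadj] at hc'
            rcases hc' with hc' | ⟨rfl, -⟩ | ⟨hax', -⟩
            · exact hc _ hab.symm _ hc'
            · exact absurd rfl haw
            · exact absurd hax' hax
          · rcases hcond hab with h | h
            · refine Or.inl fun c hc' => ?_
              rw [hadj] at hc'
              rcases hc' with hc' | ⟨rfl, -⟩ | ⟨rfl, -⟩
              · exact h _ hc'
              · exact absurd rfl haw
              · exact absurd rfl hax
            · refine Or.inr fun c hc' => ?_
              rw [hadj] at hc'
              rcases hc' with hc' | ⟨rfl, -⟩ | ⟨rfl, -⟩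
              · exact h _ hc'
              · exact absurd rfl hbw
              · exact absurd rfl hbx
      · -- new edge from w's side
        refine Or.inl fun c hc' => ?_
        rw [hadj] at hc'
        rcases hc' with hc' | ⟨-, rfl⟩ | ⟨rfl, -⟩
        · exact absurd hc' (hw c)
        · rfl
        · exact absurd rfl hwne
      · -- new edge from x's side
        refine Or.inr fun c hc' => ?_
        rw [hadj] at hc'
        rcases hc' with hc' | ⟨-, rfl⟩ | ⟨rfl, -⟩
        · exact absurd hc' (hw c)
        · rfl
        · exact absurd rfl hwne
    · constructor
      · intro v hv c hvc
        exact hv c (Or.inl hvc)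
      · intro hsub
        have h1 : w ∈ {v | ∀ c, ¬ S.Adj v c} := hw
        have h2 : w ∉ {v | ∀ c, ¬ (S ⊔ fromEdgeSet {s(w, x)}).Adj v c} := by
          intro h
          exact h x (Or.inr (by rw [fromEdgeSet_adj]; exact ⟨rfl, hwne⟩))
        exact h2 (hsub h1)
  · -- x is a leaf of a star with another leaf: reattach x to w
    push_neg at hc
    obtain ⟨z, hxz, y, hzy, hyx⟩ := hc
    have hxleaf : ∀ c, S.Adj x c → c = z := by
      rcases hcond hxz with h | h
      · exact h
      · exact absurd (h y hzy) hyx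
    have hxw : x ≠ w := fun h => hw z (h ▸ hxz)
    have hzw : z ≠ w := fun h => hw x (h ▸ hxz.symm)
    refine ⟨S.deleteEdges {s(x, z)} ⊔ fromEdgeSet {s(w, x)}, ?_, ?_, ?_⟩
    · refine sup_le ((deleteEdges_le _).trans hle) ?_
      intro a b hab
      rw [fromEdgeSet_adj, Set.mem_singleton_iff, Sym2.eq_iff] at hab
      rcases hab.1 with ⟨rfl, rfl⟩ | ⟨rfl, rfl⟩
      · exact hwx
      · exact hwx.symm
    · have hadj : ∀ a b, (S.deleteEdges {s(x, z)} ⊔ fromEdgeSet {s(w, x)}).Adj a b ↔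
          (S.Adj a b ∧ ¬ ((a = x ∧ b = z) ∨ (a = z ∧ b = x))) ∨
            ((a = w ∧ b = x) ∨ (a = x ∧ b = w)) := by
        intro a b
        simp only [sup_adj, deleteEdges_adj, fromEdgeSet_adj, Set.mem_singleton_iff,
          Sym2.eq_iff]
        constructor
        · rintro (h | ⟨h, -⟩)
          · exact Or.inl h
          · exact Or.inr h
        · rintro (h | h)
          · exact Or.inl h
          · refine Or.inr ⟨h, ?_⟩
            rcases h with ⟨rfl, rfl⟩ | ⟨rfl, rfl⟩
            · exact hwne
            · exact hwne.symm
      intro a b hab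
      rw [hadj] at hab
      rcases hab with ⟨hab, hnot⟩ | ⟨ha, hb⟩ | ⟨ha, hb⟩
      · -- old surviving edge: a, b ∉ {w, x}
        have haw : a ≠ w := fun h => hw b (h ▸ hab)
        have hbw : b ≠ w := fun h => hw a (h ▸ hab.symm)
        have hax : a ≠ x := fun h => hnot (Or.inl ⟨h, by subst h; exact hxleaf b hab⟩)
        have hbx : b ≠ x := fun h => hnot (Or.inr ⟨by subst h; exact hxleaf a hab.symm, h⟩)
        rcases hcond hab with h | h
        · refine Or.inl fun c hc' => ?_
          rw [hadj] at hc'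
          rcases hc' with ⟨hc', -⟩ | ⟨rfl, -⟩ | ⟨rfl, -⟩
          · exact h _ hc'
          · exact absurd rfl haw
          · exact absurd rfl hax
        · refine Or.inr fun c hc' => ?_
          rw [hadj] at hc'
          rcases hc' with ⟨hc', -⟩ | ⟨rfl, -⟩ | ⟨rfl, -⟩
          · exact h _ hc'
          · exact absurd rfl hbw
          · exact absurd rfl hbx
      · -- new edge, from w's side
        refine Or.inl fun c hc' => ?_
        rw [hadj] at hc'
        rcases hc' with ⟨hc', -⟩ | ⟨-, h2⟩ | ⟨h1, -⟩
        · rw [ha] at hc'; exact absurd hc' (hw c)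
        · rw [hb]; exact h2
        · exact absurd (ha.symm.trans h1) hwne
      · -- new edge, from x's side
        refine Or.inr fun c hc' => ?_
        rw [hadj] at hc'
        rcases hc' with ⟨hc', -⟩ | ⟨-, h2⟩ | ⟨h1, -⟩
        · rw [hb] at hc'; exact absurd hc' (hw c)
        · rw [ha]; exact h2
        · exact absurd (hb.symm.trans h1) hwne
    · constructor
      · -- everything covered in S stays covered
        intro v hv c hvc
        by_cases hvx : v = x
        · subst hvx
          exact hv w (Or.inr (by
            rw [fromEdgeSet_adj, Set.mem_singleton_iff]
            exact ⟨Sym2.eq_swap, hxw⟩))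
        · by_cases hvz : v = z
          · subst hvz
            refine hv y (Or.inl ?_)
            rw [deleteEdges_adj, Set.mem_singleton_iff, Sym2.eq_iff]
            refine ⟨hzy, ?_⟩
            rintro (⟨rfl, -⟩ | ⟨-, rfl⟩)
            · exact hxz.ne rfl
            · exact hyx rfl
          · refine hv c (Or.inl ?_)
            rw [deleteEdges_adj, Set.mem_singleton_iff, Sym2.eq_iff]
            refine ⟨hvc, ?_⟩
            rintro (⟨rfl, -⟩ | ⟨rfl, -⟩)
            · exact hvx rfl
            · exact hvz rfl
      · intro hsub
        have h1 : w ∈ {v | ∀ c, ¬ S.Adj v c} := hw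
        have h2 : w ∉ {v | ∀ c, ¬ (S.deleteEdges {s(x, z)} ⊔ fromEdgeSet {s(w, x)}).Adj v c} := by
          intro h
          exact h x (Or.inr (by rw [fromEdgeSet_adj]; exact ⟨rfl, hwne⟩))
        exact h2 (hsub h1)

private lemma exists_isStarFactor {V : Type*} [Fintype V] (G : SimpleGraph V)
    (hiso : ∀ v, ∃ w, G.Adj v w) : ∃ S, IsStarFactor G S := by
  classical
  set A : Set ℕ :=
    {n | ∃ S : SimpleGraph V, S ≤ G ∧ StarCond S ∧ {v | ∀ c, ¬ S.Adj v c}.ncard = n} with hA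
  have hAne : A.Nonempty := by
    refine ⟨{v | ∀ c, ¬ (⊥ : SimpleGraph V).Adj v c}.ncard, ?_⟩
    rw [hA, Set.mem_setOf_eq]
    exact ⟨⊥, bot_le, fun u v h => absurd h (by simp), rfl⟩
  obtain ⟨S, hle, hcond, hcard⟩ := Nat.sInf_mem hAne
  by_cases hzero : sInf A = 0
  · refine ⟨S, hle, ?_, hcond⟩
    rw [hzero] at hcard
    have hfin : {v | ∀ c, ¬ S.Adj v c}.Finite := Set.toFinite _
    have := (Set.ncard_eq_zero hfin).mp hcard
    intro v
    by_contra hcon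
    push_neg at hcon
    have : v ∈ {v | ∀ c, ¬ S.Adj v c} := hcon
    simp [‹{v | ∀ c, ¬ S.Adj v c} = ∅›] at this
  · exfalso
    obtain ⟨w, hw⟩ := Set.nonempty_of_ncard_ne_zero (hcard ▸ hzero)
    obtain ⟨x, hwx⟩ := hiso w
    obtain ⟨S', hle', hcond', hsub⟩ := exchange_step G S hle hcond hw hwx
    have hlt : {v | ∀ c, ¬ S'.Adj v c}.ncard < sInf A := by
      rw [← hcard]
      exact Set.ncard_lt_ncard hsub (Set.toFinite _)
    have hmem : {v | ∀ c, ¬ S'.Adj v c}.ncard ∈ A := by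
      rw [hA, Set.mem_setOf_eq]
      exact ⟨S', hle', hcond', rfl⟩
    exact absurd (Nat.sInf_le hmem) (not_le.mpr hlt)

/-- If `G` contains a triangle `v₁v₂v₃` with `v₂, v₃` of degree two and `v₁` a stem,
then `G` has two star-factors with different numbers of edges. -/
theorem stmt_5 {V : Type*} [Fintype V] (G : SimpleGraph V) (v₁ v₂ v₃ u : V)
    (h12 : G.Adj v₁ v₂) (h23 : G.Adj v₂ v₃) (h13 : G.Adj v₁ v₃)
    (hd2 : (G.neighborSet v₂).ncard = 2) (hd3 : (G.neighborSet v₃).ncard = 2)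
    (hu : G.Adj v₁ u) (hud : (G.neighborSet u).ncard = 1)
    (hiso : ∀ v, ∃ w, G.Adj v w) :
    ∃ S₁ S₂ : SimpleGraph V, IsStarFactor G S₁ ∧ IsStarFactor G S₂ ∧
      S₁.edgeSet.ncard ≠ S₂.edgeSet.ncard := by
  classical
  have n12 : v₁ ≠ v₂ := h12.ne
  have n23 : v₂ ≠ v₃ := h23.ne
  have n13 : v₁ ≠ v₃ := h13.ne
  have nu1 : u ≠ v₁ := hu.ne'
  have nu2 : u ≠ v₂ := by intro h; rw [h] at hud; rw [hud] at hd2; omega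
  have nu3 : u ≠ v₃ := by intro h; rw [h] at hud; rw [hud] at hd3; omega
  -- neighbor sets
  have N2 : G.neighborSet v₂ = {v₁, v₃} := by
    refine (Set.eq_of_subset_of_ncard_le ?_ ?_ (Set.toFinite _)).symm
    · rintro a (rfl | rfl)
      · exact h12.symm
      · exact h23
    · rw [hd2, Set.ncard_pair n13]
  have N3 : G.neighborSet v₃ = {v₁, v₂} := by
    refine (Set.eq_of_subset_of_ncard_le ?_ ?_ (Set.toFinite _)).symm
    · rintro a (rfl | rfl)
      · exact h13.symm
      · exact h23.symm
    · rw [hd3, Set.ncard_pair n12]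
  have NU : G.neighborSet u = {v₁} := by
    refine (Set.eq_of_subset_of_ncard_le ?_ ?_ (Set.toFinite _)).symm
    · rintro a rfl
      exact hu.symm
    · rw [hud, Set.ncard_singleton]
  have hG2 : ∀ c, G.Adj v₂ c → c = v₁ ∨ c = v₃ := by
    intro c h
    have : c ∈ G.neighborSet v₂ := h
    rwa [N2] at this
  have hG3 : ∀ c, G.Adj v₃ c → c = v₁ ∨ c = v₂ := by
    intro c h
    have : c ∈ G.neighborSet v₃ := h
    rwa [N3] at this
  have hGu : ∀ c, G.Adj u c → c = v₁ := by
    intro c h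
    have : c ∈ G.neighborSet u := h
    rwa [NU] at this
  -- a star factor
  obtain ⟨S, hSle, hScov, hScond⟩ := exists_isStarFactor G hiso
  have hSu : S.Adj u v₁ := by
    obtain ⟨c, hc⟩ := hScov u
    rwa [hGu c (hSle hc)] at hc
  have hS2 : ∀ c, S.Adj v₂ c → c = v₁ ∨ c = v₃ := fun c h => hG2 c (hSle h)
  have hS3 : ∀ c, S.Adj v₃ c → c = v₁ ∨ c = v₂ := fun c h => hG3 c (hSle h)
  -- every S-neighbor of v₁ is a leaf of v₁
  have hcent : ∀ c, S.Adj v₁ c → ∀ d, S.Adj c d → d = v₁ := by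
    intro c hc d hd
    rcases hScond hc with h | h
    · have hcu : u = c := h u hSu.symm
      subst hcu
      exact hGu d (hSle hd)
    · exact h d hd
  set S₁ : SimpleGraph V :=
    S.deleteEdges {s(v₂, v₃)} ⊔ fromEdgeSet {s(v₁, v₂), s(v₁, v₃)} with hS₁def
  set S₂ : SimpleGraph V :=
    S.deleteEdges {s(v₁, v₂), s(v₁, v₃)} ⊔ fromEdgeSet {s(v₂, v₃)} with hS₂def
  have hadj1 : ∀ a b, S₁.Adj a b ↔
      (S.Adj a b ∧ ¬((a = v₂ ∧ b = v₃) ∨ (a = v₃ ∧ b = v₂))) ∨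
      (((a = v₁ ∧ b = v₂) ∨ (a = v₂ ∧ b = v₁)) ∨ ((a = v₁ ∧ b = v₃) ∨ (a = v₃ ∧ b = v₁))) := by
    intro a b
    rw [hS₁def]
    simp only [sup_adj, deleteEdges_adj, fromEdgeSet_adj, Set.mem_insert_iff,
      Set.mem_singleton_iff, Sym2.eq_iff]
    constructor
    · rintro (⟨h, hn⟩ | ⟨h, -⟩)
      · exact Or.inl ⟨h, hn⟩
      · exact Or.inr h
    · rintro (⟨h, hn⟩ | h)
      · exact Or.inl ⟨h, hn⟩
      · refine Or.inr ⟨h, ?_⟩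
        rcases h with (⟨rfl, rfl⟩ | ⟨rfl, rfl⟩) | (⟨rfl, rfl⟩ | ⟨rfl, rfl⟩)
        exacts [n12, n12.symm, n13, n13.symm]
  have hadj2 : ∀ a b, S₂.Adj a b ↔
      (S.Adj a b ∧ ¬(((a = v₁ ∧ b = v₂) ∨ (a = v₂ ∧ b = v₁)) ∨
        ((a = v₁ ∧ b = v₃) ∨ (a = v₃ ∧ b = v₁)))) ∨
      ((a = v₂ ∧ b = v₃) ∨ (a = v₃ ∧ b = v₂)) := by
    intro a b
    rw [hS₂def]
    simp only [sup_adj, deleteEdges_adj, fromEdgeSet_adj, Set.mem_insert_iff,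
      Set.mem_singleton_iff, Sym2.eq_iff]
    constructor
    · rintro (⟨h, hn⟩ | ⟨h, -⟩)
      · exact Or.inl ⟨h, hn⟩
      · exact Or.inr h
    · rintro (⟨h, hn⟩ | h)
      · exact Or.inl ⟨h, hn⟩
      · refine Or.inr ⟨h, ?_⟩
        rcases h with ⟨rfl, rfl⟩ | ⟨rfl, rfl⟩
        exacts [n23, n23.symm]
  -- leaf facts in S₁
  have leaf1₂ : ∀ c, S₁.Adj v₂ c → c = v₁ := by
    intro c h
    rw [hadj1] at h
    rcases h with ⟨h, hn⟩ | ((⟨h1, -⟩ | ⟨-, h2⟩) | (⟨h1, -⟩ | ⟨h1, h2⟩))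
    · rcases hS2 c h with rfl | rfl
      · rfl
      · exact absurd (Or.inl ⟨rfl, rfl⟩) hn
    · exact absurd h1.symm n12
    · exact h2
    · exact absurd h1.symm n12
    · exact absurd h1 n23
  have leaf1₃ : ∀ c, S₁.Adj v₃ c → c = v₁ := by
    intro c h
    rw [hadj1] at h
    rcases h with ⟨h, hn⟩ | ((⟨h1, -⟩ | ⟨h1, h2⟩) | (⟨h1, -⟩ | ⟨-, h2⟩))
    · rcases hS3 c h with rfl | rfl
      · rfl
      · exact absurd (Or.inr ⟨rfl, rfl⟩) hn
    · exact absurd h1.symm n13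
    · exact absurd h1.symm n23
    · exact absurd h1.symm n13
    · exact h2
  -- leaf facts in S₂
  have leaf2₂ : ∀ c, S₂.Adj v₂ c → c = v₃ := by
    intro c h
    rw [hadj2] at h
    rcases h with ⟨h, hn⟩ | (⟨-, h2⟩ | ⟨h1, -⟩)
    · rcases hS2 c h with rfl | rfl
      · exact absurd (Or.inl (Or.inr ⟨rfl, rfl⟩)) hn
      · rfl
    · exact h2
    · exact absurd h1 n23
  have leaf2₃ : ∀ c, S₂.Adj v₃ c → c = v₂ := by
    intro c h
    rw [hadj2] at h
    rcases h with ⟨h, hn⟩ | (⟨h1, -⟩ | ⟨-, h2⟩)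
    · rcases hS3 c h with rfl | rfl
      · exact absurd (Or.inr (Or.inr ⟨rfl, rfl⟩)) hn
      · rfl
    · exact absurd h1.symm n23
    · exact h2
  have hSF1 : IsStarFactor G S₁ := by
    refine ⟨?_, ?_, ?_⟩
    · rw [hS₁def]
      refine sup_le ((deleteEdges_le _).trans hSle) ?_
      intro a b hab
      rw [fromEdgeSet_adj, Set.mem_insert_iff, Set.mem_singleton_iff, Sym2.eq_iff,
        Sym2.eq_iff] at hab
      rcases hab.1 with (⟨rfl, rfl⟩ | ⟨rfl, rfl⟩) | (⟨rfl, rfl⟩ | ⟨rfl, rfl⟩)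
      exacts [h12, h12.symm, h13, h13.symm]
    · intro v
      by_cases hv1 : v = v₁
      · exact ⟨v₂, (hadj1 v v₂).mpr (Or.inr (Or.inl (Or.inl ⟨hv1, rfl⟩)))⟩
      · by_cases hv2 : v = v₂
        · exact ⟨v₁, (hadj1 v v₁).mpr (Or.inr (Or.inl (Or.inr ⟨hv2, rfl⟩)))⟩
        · by_cases hv3 : v = v₃
          · exact ⟨v₁, (hadj1 v v₁).mpr (Or.inr (Or.inr (Or.inr ⟨hv3, rfl⟩)))⟩
          · obtain ⟨c, hc⟩ := hScov v
            refine ⟨c, (hadj1 v c).mpr (Or.inl ⟨hc, ?_⟩)⟩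
            rintro (⟨rfl, -⟩ | ⟨rfl, -⟩)
            · exact hv2 rfl
            · exact hv3 rfl
    · intro a b hab
      by_cases hb2 : b = v₂
      · subst hb2
        have ha : a = v₁ := leaf1₂ a hab.symm
        exact Or.inr fun c hc => (leaf1₂ c hc).trans ha.symm
      · by_cases hb3 : b = v₃
        · subst hb3
          have ha : a = v₁ := leaf1₃ a hab.symm
          exact Or.inr fun c hc => (leaf1₃ c hc).trans ha.symm
        · by_cases ha2 : a = v₂
          · subst ha2
            have hb : b = v₁ := leaf1₂ b hab
            exact Or.inl fun c hc => (leaf1₂ c hc).trans hb.symm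
          · by_cases ha3 : a = v₃
            · subst ha3
              have hb : b = v₁ := leaf1₃ b hab
              exact Or.inl fun c hc => (leaf1₃ c hc).trans hb.symm
            · -- a, b ∉ {v₂, v₃}; so the edge is an old one
              have hab' : S.Adj a b := by
                rw [hadj1] at hab
                rcases hab with ⟨h, -⟩ |
                    ((⟨-, h2⟩ | ⟨h1, -⟩) | (⟨-, h2⟩ | ⟨h1, -⟩))
                · exact h
                · exact absurd h2 hb2
                · exact absurd h1 ha2
                · exact absurd h2 hb3
                · exact absurd h1 ha3
              by_cases ha1 : a = v₁
              · subst ha1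
                refine Or.inr fun c hc => ?_
                rw [hadj1] at hc
                rcases hc with ⟨h, -⟩ | ((⟨h1, -⟩ | ⟨h1, -⟩) | (⟨h1, -⟩ | ⟨h1, -⟩))
                · exact hcent b hab' c h
                · exact absurd h1 hab'.ne'
                · exact absurd h1 hb2
                · exact absurd h1 hab'.ne'
                · exact absurd h1 hb3
              · by_cases hb1 : b = v₁
                · subst hb1
                  refine Or.inl fun c hc => ?_
                  rw [hadj1] at hc
                  rcases hc with ⟨h, -⟩ | ((⟨h1, -⟩ | ⟨h1, -⟩) | (⟨h1, -⟩ | ⟨h1, -⟩))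
                  · exact hcent a hab'.symm c h
                  · exact absurd h1 ha1
                  · exact absurd h1 ha2
                  · exact absurd h1 ha1
                  · exact absurd h1 ha3
                · rcases hScond hab' with h | h
                  · refine Or.inl fun c hc => ?_
                    rw [hadj1] at hc
                    rcases hc with ⟨hc', -⟩ | ((⟨h1, -⟩ | ⟨h1, -⟩) | (⟨h1, -⟩ | ⟨h1, -⟩))
                    · exact h c hc'
                    · exact absurd h1 ha1
                    · exact absurd h1 ha2
                    · exact absurd h1 ha1
                    · exact absurd h1 ha3
                  · refine Or.inr fun c hc => ?_
                    rw [hadj1] at hc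
                    rcases hc with ⟨hc', -⟩ | ((⟨h1, -⟩ | ⟨h1, -⟩) | (⟨h1, -⟩ | ⟨h1, -⟩))
                    · exact h c hc'
                    · exact absurd h1 hb1
                    · exact absurd h1 hb2
                    · exact absurd h1 hb1
                    · exact absurd h1 hb3
  have hSF2 : IsStarFactor G S₂ := by
    refine ⟨?_, ?_, ?_⟩
    · rw [hS₂def]
      refine sup_le ((deleteEdges_le _).trans hSle) ?_
      intro a b hab
      rw [fromEdgeSet_adj, Set.mem_singleton_iff, Sym2.eq_iff] at hab
      rcases hab.1 with ⟨rfl, rfl⟩ | ⟨rfl, rfl⟩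
      exacts [h23, h23.symm]
    · intro v
      by_cases hv1 : v = v₁
      · refine ⟨u, (hadj2 v u).mpr (Or.inl ⟨hv1 ▸ hSu.symm, ?_⟩)⟩
        rintro ((⟨-, h2⟩ | ⟨h1, -⟩) | (⟨-, h2⟩ | ⟨h1, -⟩))
        · exact nu2 h2
        · exact n12 (hv1 ▸ h1)
        · exact nu3 h2
        · exact n13 (hv1 ▸ h1)
      · by_cases hv2 : v = v₂
        · exact ⟨v₃, (hadj2 v v₃).mpr (Or.inr (Or.inl ⟨hv2, rfl⟩))⟩
        · by_cases hv3 : v = v₃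
          · exact ⟨v₂, (hadj2 v v₂).mpr (Or.inr (Or.inr ⟨hv3, rfl⟩))⟩
          · obtain ⟨c, hc⟩ := hScov v
            refine ⟨c, (hadj2 v c).mpr (Or.inl ⟨hc, ?_⟩)⟩
            rintro ((⟨h1, -⟩ | ⟨h1, -⟩) | (⟨h1, -⟩ | ⟨h1, -⟩))
            · exact hv1 h1
            · exact hv2 h1
            · exact hv1 h1
            · exact hv3 h1
    · intro a b hab
      by_cases hb2 : b = v₂
      · subst hb2
        have ha : a = v₃ := leaf2₂ a hab.symm
        exact Or.inr fun c hc => (leaf2₂ c hc).trans ha.symm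
      · by_cases hb3 : b = v₃
        · subst hb3
          have ha : a = v₂ := leaf2₃ a hab.symm
          exact Or.inr fun c hc => (leaf2₃ c hc).trans ha.symm
        · by_cases ha2 : a = v₂
          · subst ha2
            have hb : b = v₃ := leaf2₂ b hab
            exact Or.inl fun c hc => (leaf2₂ c hc).trans hb.symm
          · by_cases ha3 : a = v₃
            · subst ha3
              have hb : b = v₂ := leaf2₃ b hab
              exact Or.inl fun c hc => (leaf2₃ c hc).trans hb.symm
            · have hab' : S.Adj a b := by
                rw [hadj2] at hab
                rcases hab with ⟨h, -⟩ | (⟨h1, -⟩ | ⟨h1, -⟩)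
                · exact h
                · exact absurd h1 ha2
                · exact absurd h1 ha3
              by_cases ha1 : a = v₁
              · subst ha1
                refine Or.inr fun c hc => ?_
                rw [hadj2] at hc
                rcases hc with ⟨h, -⟩ | (⟨h1, -⟩ | ⟨h1, -⟩)
                · exact hcent b hab' c h
                · exact absurd h1 hb2
                · exact absurd h1 hb3
              · by_cases hb1 : b = v₁
                · subst hb1
                  refine Or.inl fun c hc => ?_
                  rw [hadj2] at hc
                  rcases hc with ⟨h, -⟩ | (⟨h1, -⟩ | ⟨h1, -⟩)
                  · exact hcent a hab'.symm c h
                  · exact absurd h1 ha2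
                  · exact absurd h1 ha3
                · rcases hScond hab' with h | h
                  · refine Or.inl fun c hc => ?_
                    rw [hadj2] at hc
                    rcases hc with ⟨hc', -⟩ | (⟨h1, -⟩ | ⟨h1, -⟩)
                    · exact h c hc'
                    · exact absurd h1 ha2
                    · exact absurd h1 ha3
                  · refine Or.inr fun c hc => ?_
                    rw [hadj2] at hc
                    rcases hc with ⟨hc', -⟩ | (⟨h1, -⟩ | ⟨h1, -⟩)
                    · exact h c hc'
                    · exact absurd h1 hb2
                    · exact absurd h1 hb3
  -- edge counts
  set E : Set (Sym2 V) := S.edgeSet \ {s(v₁, v₂), s(v₁, v₃), s(v₂, v₃)} with hEdef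
  have hd12 : ¬ (s(v₁, v₂) : Sym2 V).IsDiag := by
    rw [Sym2.mk_isDiag_iff]; exact n12
  have hd13 : ¬ (s(v₁, v₃) : Sym2 V).IsDiag := by
    rw [Sym2.mk_isDiag_iff]; exact n13
  have hd23 : ¬ (s(v₂, v₃) : Sym2 V).IsDiag := by
    rw [Sym2.mk_isDiag_iff]; exact n23
  have hE1 : S₁.edgeSet = E ∪ {s(v₁, v₂), s(v₁, v₃)} := by
    rw [hS₁def, edgeSet_sup, edgeSet_deleteEdges, edgeSet_fromEdgeSet]
    ext e
    simp only [hEdef, Set.mem_union, Set.mem_diff, Set.mem_insert_iff,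
      Set.mem_singleton_iff, Set.mem_setOf_eq]
    constructor
    · rintro (⟨he, h3⟩ | ⟨(h | h), -⟩)
      · by_cases h1 : e = s(v₁, v₂)
        · exact Or.inr (Or.inl h1)
        · by_cases h2 : e = s(v₁, v₃)
          · exact Or.inr (Or.inr h2)
          · exact Or.inl ⟨he, by push_neg; exact ⟨h1, h2, h3⟩⟩
      · exact Or.inr (Or.inl h)
      · exact Or.inr (Or.inr h)
    · rintro (⟨he, hn⟩ | (rfl | rfl))
      · push_neg at hn
        exact Or.inl ⟨he, hn.2.2⟩
      · exact Or.inr ⟨Or.inl rfl, hd12⟩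
      · exact Or.inr ⟨Or.inr rfl, hd13⟩
  have hE2 : S₂.edgeSet = E ∪ {s(v₂, v₃)} := by
    rw [hS₂def, edgeSet_sup, edgeSet_deleteEdges, edgeSet_fromEdgeSet]
    ext e
    simp only [hEdef, Set.mem_union, Set.mem_diff, Set.mem_insert_iff,
      Set.mem_singleton_iff, Set.mem_setOf_eq]
    constructor
    · rintro (⟨he, hn⟩ | ⟨h, -⟩)
      · push_neg at hn
        by_cases h3 : e = s(v₂, v₃)
        · exact Or.inr h3
        · exact Or.inl ⟨he, by push_neg; exact ⟨hn.1, hn.2, h3⟩⟩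
      · exact Or.inr h
    · rintro (⟨he, hn⟩ | rfl)
      · push_neg at hn
        exact Or.inl ⟨he, by push_neg; exact ⟨hn.1, hn.2.1⟩⟩
      · exact Or.inr ⟨rfl, hd23⟩
  have hEfin : E.Finite := Set.toFinite _
  have hne1213 : (s(v₁, v₂) : Sym2 V) ≠ s(v₁, v₃) := by
    rw [Ne, Sym2.eq_iff]
    rintro (⟨-, h⟩ | ⟨h, -⟩)
    · exact n23 h
    · exact n13 h
  have hc1 : S₁.edgeSet.ncard = E.ncard + 2 := by
    rw [hE1, Set.ncard_union_eq ?_ hEfin (Set.toFinite _), Set.ncard_pair hne1213]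
    rw [Set.disjoint_right]
    rintro e (rfl | rfl) he
    · exact he.2 (Or.inl rfl)
    · exact he.2 (Or.inr (Or.inl rfl))
  have hc2 : S₂.edgeSet.ncard = E.ncard + 1 := by
    rw [hE2, Set.ncard_union_eq ?_ hEfin (Set.toFinite _), Set.ncard_singleton]
    rw [Set.disjoint_right]
    rintro e rfl he
    · exact he.2 (Or.inr (Or.inr rfl))
  exact ⟨S₁, S₂, hSF1, hSF2, by rw [hc1, hc2]; omega⟩
end

section
/- Let G be a finite simple graph all of whose star-factors have the same number of edges, and suppose G contains a triangle v₁v₂v₃ in which v₂ and v₃ have degree two in G and v₁ has degree at least three. Then every neighbor of v₁ other than v₂ and v₃ is a stem of G. -/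
/-! Suppose the neighbour `x` of `v₁` is not a stem. Delete `v₂`, `v₃` and every edge at `x`
except `xv₁`: no other vertex becomes isolated, since it would have had `x` as its only
neighbour. A minimum edge cover of what remains is a star forest in which `x` is a leaf at `v₁`,
so `v₁` is the centre of its star. Completing this forest either by the edge `v₂v₃` or by the two
edges `v₁v₂`, `v₁v₃` gives two star-factors of `G` whose numbers of edges differ by one. -/

open SimpleGraph

namespace SimpleGraph

variable {V : Type*} {F : SimpleGraph V} {a c x : V}

def IsStarForest (F : SimpleGraph V) : Prop :=
  ∀ ⦃u v⦄, F.Adj u v → (∀ w, F.Adj u w → w = v) ∨ (∀ w, F.Adj v w → w = u)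

def IsStarCenter (F : SimpleGraph V) (c : V) : Prop :=
  ∀ ⦃t⦄, F.Adj c t → ∀ ⦃w⦄, F.Adj t w → w = c

theorem exists_isStarForest_le_support_eq [Finite V] (H : SimpleGraph V) :
    ∃ F ≤ H, F.IsStarForest ∧ F.support = H.support := by
  obtain ⟨F, ⟨hFH, hFsupp⟩, hmin⟩ :=
    (measure fun F : SimpleGraph V => F.edgeSet.ncard).wf.has_min
      {F | F ≤ H ∧ F.support = H.support} ⟨H, le_rfl, rfl⟩
  refine ⟨F, hFH, fun u v huv => ?_, hFsupp⟩
  -- an edge both of whose ends have other neighbours could be deleted from a minimum cover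
  by_contra! ⟨⟨w, huw, hwv⟩, ⟨w', hvw', hw'u⟩⟩
  have hsupp : (F.deleteEdges {s(u, v)}).support = F.support := by
    refine (support_mono (deleteEdges_le _)).antisymm fun z hz => ?_
    obtain ⟨y, hzy⟩ := hz
    by_cases hzy' : s(z, y) = s(u, v)
    · rcases Sym2.eq_iff.mp hzy' with ⟨rfl, -⟩ | ⟨rfl, -⟩
      · exact ⟨w, (deleteEdges_adj ..).mpr ⟨huw, by rwa [Set.mem_singleton_iff, Sym2.congr_right]⟩⟩
      · refine ⟨w', (deleteEdges_adj ..).mpr ⟨hvw', ?_⟩⟩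
        rwa [Set.mem_singleton_iff, Sym2.eq_swap, Sym2.congr_left]
    · exact ⟨y, (deleteEdges_adj ..).mpr ⟨hzy, hzy'⟩⟩
  refine hmin _ ⟨(deleteEdges_le _).trans hFH, hsupp.trans hFsupp⟩ ?_
  change (F.deleteEdges _).edgeSet.ncard < F.edgeSet.ncard
  rw [edgeSet_deleteEdges]
  exact Set.ncard_sdiff_singleton_lt_of_mem huv (Set.toFinite _)

theorem IsStarForest.isStarCenter (hF : F.IsStarForest) (hcx : F.Adj c x)
    (hx : ∀ w, F.Adj x w → w = c) : F.IsStarCenter c := by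
  intro t hct
  rcases hF hct with hc | ht
  · obtain rfl := hc x hcx
    exact hx
  · exact ht

theorem IsStarCenter.sup_edge (hc : F.IsStarCenter c) (ha : a ∉ F.support) (hca : c ≠ a) :
    (F ⊔ edge c a).IsStarCenter c := by
  have hFa : ∀ w, ¬ F.Adj a w := fun w h => ha ⟨w, h⟩
  intro t hct w htw
  simp only [sup_adj, edge_adj] at hct htw
  grind [IsStarCenter, SimpleGraph.irrefl]

theorem IsStarForest.sup_edge (hF : F.IsStarForest) (hc : F.IsStarCenter c)
    (ha : a ∉ F.support) (hca : c ≠ a) : (F ⊔ edge c a).IsStarForest := by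
  have hFa : ∀ w, ¬ F.Adj a w := fun w h => ha ⟨w, h⟩
  intro u v huv
  simp only [sup_adj, edge_adj] at huv ⊢
  grind [IsStarCenter, IsStarForest, SimpleGraph.irrefl, SimpleGraph.adj_symm]

theorem ncard_edgeSet_sup_edge [Finite V] (ha : a ∉ F.support) (hca : c ≠ a) :
    (F ⊔ edge c a).edgeSet.ncard = F.edgeSet.ncard + 1 := by
  rw [edgeSet_sup, edgeSet_edge_of_ne hca, Set.union_singleton, Set.ncard_insert_of_notMem]
  exact fun h => ha ⟨c, ((mem_edgeSet F).mp h).symm⟩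

theorem support_sup_edge (hca : c ≠ a) :
    (F ⊔ edge c a).support = insert c (insert a F.support) := by
  ext z
  constructor
  · rintro ⟨w, hw | hw⟩
    · exact .inr (.inr ⟨w, hw⟩)
    · rcases (edge_adj ..).mp hw with ⟨⟨rfl, -⟩ | ⟨rfl, -⟩, -⟩
      · exact .inl rfl
      · exact .inr (.inl rfl)
  · rintro (rfl | rfl | ⟨w, hw⟩)
    · exact ⟨a, .inr ((edge_adj ..).mpr ⟨.inl ⟨rfl, rfl⟩, hca⟩)⟩
    · exact ⟨c, .inr ((edge_adj ..).mpr ⟨.inr ⟨rfl, rfl⟩, hca.symm⟩)⟩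
    · exact ⟨w, .inl hw⟩

theorem eq_or_eq_of_ncard_neighborSet_eq_two [Finite V] {G : SimpleGraph V} {v w₁ w₂ u : V}
    (hv : (G.neighborSet v).ncard = 2) (h₁ : G.Adj v w₁) (h₂ : G.Adj v w₂) (hne : w₁ ≠ w₂)
    (hu : G.Adj v u) : u = w₁ ∨ u = w₂ := by
  have hN : {w₁, w₂} = G.neighborSet v :=
    Set.eq_of_subset_of_ncard_le (Set.insert_subset h₁ (Set.singleton_subset_iff.mpr h₂))
      (by rw [hv, Set.ncard_pair hne]) (Set.toFinite _)
  have hu' : u ∈ G.neighborSet v := hu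
  rwa [← hN] at hu'

section Triangle

variable [Finite V] {G : SimpleGraph V} {v₁ v₂ v₃ x : V}

theorem exists_isStarFactor_ncard_edgeSet_ne (hFG : F ≤ G) (hF : F.IsStarForest)
    (hsupp : F.support = {v₂, v₃}ᶜ) (hc : F.IsStarCenter v₁)
    (h12 : G.Adj v₁ v₂) (h23 : G.Adj v₂ v₃) (h13 : G.Adj v₁ v₃) :
    ∃ S₁ S₂, IsStarFactor G S₁ ∧ IsStarFactor G S₂ ∧ S₁.edgeSet.ncard ≠ S₂.edgeSet.ncard := by
  have hv₂ : v₂ ∉ F.support := by simp [hsupp]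
  have hv₃ : v₃ ∉ F.support := by simp [hsupp]
  have hv₃' : v₃ ∉ (F ⊔ edge v₁ v₂).support := by
    simp [support_sup_edge h12.ne, hsupp, h13.ne', h23.ne']
  have hcover (S : SimpleGraph V) (hS : S.support = Set.univ) : ∀ v, ∃ u, S.Adj v u :=
    fun v => (hS ▸ Set.mem_univ v : v ∈ S.support)
  refine ⟨F ⊔ edge v₂ v₃, F ⊔ edge v₁ v₂ ⊔ edge v₁ v₃, ⟨?_, hcover _ ?_, ?_⟩,
    ⟨?_, hcover _ ?_, ?_⟩, ?_⟩
  · exact sup_le hFG ((edge_le_iff G).mpr (.inr h23))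
  · ext v
    simp only [support_sup_edge h23.ne, hsupp, Set.mem_insert_iff, Set.mem_compl_iff,
      Set.mem_singleton_iff, Set.mem_univ, iff_true]
    tauto
  · exact hF.sup_edge (fun t ht => absurd ⟨t, ht⟩ hv₂) hv₃ h23.ne
  · exact sup_le (sup_le hFG ((edge_le_iff G).mpr (.inr h12))) ((edge_le_iff G).mpr (.inr h13))
  · ext v
    simp only [support_sup_edge h13.ne, support_sup_edge h12.ne, hsupp, Set.mem_insert_iff,
      Set.mem_compl_iff, Set.mem_singleton_iff, Set.mem_univ, iff_true]
    tauto
  · exact (hF.sup_edge hc hv₂ h12.ne).sup_edge (hc.sup_edge hv₂ h12.ne) hv₃' h13.ne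
  · rw [ncard_edgeSet_sup_edge hv₃ h23.ne, ncard_edgeSet_sup_edge hv₃' h13.ne,
      ncard_edgeSet_sup_edge hv₂ h12.ne]
    omega

theorem exists_le_support_eq_compl_of_not_stem (hiso : ∀ v, ∃ w, G.Adj v w)
    (h12 : G.Adj v₁ v₂) (h23 : G.Adj v₂ v₃) (h13 : G.Adj v₁ v₃)
    (hd2 : (G.neighborSet v₂).ncard = 2) (hd3 : (G.neighborSet v₃).ncard = 2)
    (hx : G.Adj v₁ x) (hx2 : x ≠ v₂) (hx3 : x ≠ v₃)
    (hstem : ∀ l, G.Adj x l → (G.neighborSet l).ncard ≠ 1) :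
    ∃ H ≤ G, H.support = {v₂, v₃}ᶜ ∧ H.Adj v₁ x ∧ ∀ w, H.Adj x w → w = v₁ := by
  set H := G.deleteEdges {e | v₂ ∈ e ∨ v₃ ∈ e ∨ (x ∈ e ∧ v₁ ∉ e)}
  have hH (u w : V) : H.Adj u w ↔ G.Adj u w ∧ u ≠ v₂ ∧ w ≠ v₂ ∧ u ≠ v₃ ∧ w ≠ v₃ ∧
      (u = x → w = v₁) ∧ (w = x → u = v₁) := by
    have := hx.ne
    simp only [H, deleteEdges_adj, Set.mem_ofPred_eq, Sym2.mem_iff]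
    grind
  have h1x : H.Adj v₁ x := (hH _ _).mpr
    ⟨hx, h12.ne, hx2, h13.ne, hx3, fun h => absurd h hx.ne, fun _ => rfl⟩
  refine ⟨H, deleteEdges_le _, Set.ext fun v => ⟨?_, fun hv => ?_⟩, h1x,
    fun w hw => ((hH x w).mp hw).2.2.2.2.2.1 rfl⟩
  · rintro ⟨w, hvw⟩
    have := (hH v w).mp hvw
    simp only [Set.mem_compl_iff, Set.mem_insert_iff, Set.mem_singleton_iff]
    tauto
  simp only [Set.mem_compl_iff, Set.mem_insert_iff, Set.mem_singleton_iff, not_or] at hv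
  obtain ⟨hv2, hv3⟩ := hv
  rcases eq_or_ne v v₁ with rfl | hv1
  · exact ⟨x, h1x⟩
  rcases eq_or_ne v x with rfl | hvx
  · exact ⟨v₁, h1x.symm⟩
  obtain ⟨w, hvw, hwx⟩ : ∃ w, G.Adj v w ∧ w ≠ x := by
    by_contra! h
    obtain ⟨w, hvw⟩ := hiso v
    have hxv : G.Adj x v := (h w hvw ▸ hvw).symm
    have hN : G.neighborSet v = {x} := Set.eq_singleton_iff_unique_mem.mpr ⟨hxv.symm, h⟩
    exact hstem v hxv (by rw [hN, Set.ncard_singleton])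
  have hw2 : w ≠ v₂ := by
    rintro rfl
    rcases eq_or_eq_of_ncard_neighborSet_eq_two hd2 h12.symm h23 h13.ne hvw.symm with h | h
    exacts [hv1 h, hv3 h]
  have hw3 : w ≠ v₃ := by
    rintro rfl
    rcases eq_or_eq_of_ncard_neighborSet_eq_two hd3 h13.symm h23.symm h12.ne hvw.symm with h | h
    exacts [hv1 h, hv2 h]
  exact ⟨w, (hH v w).mpr ⟨hvw, hv2, hw2, hv3, hw3, fun h => absurd h hvx, fun h => absurd h hwx⟩⟩

end Triangle

end SimpleGraph

theorem stmt_6_general {V : Type*} [Fintype V] (G : SimpleGraph V)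
    (huniform : ∀ S₁ S₂ : SimpleGraph V, IsStarFactor G S₁ → IsStarFactor G S₂ →
      S₁.edgeSet.ncard = S₂.edgeSet.ncard)
    (v₁ v₂ v₃ : V)
    (h12 : G.Adj v₁ v₂) (h23 : G.Adj v₂ v₃) (h13 : G.Adj v₁ v₃)
    (hd2 : (G.neighborSet v₂).ncard = 2) (hd3 : (G.neighborSet v₃).ncard = 2)
    (hiso : ∀ v, ∃ w, G.Adj v w) :
    ∀ x, G.Adj v₁ x → x ≠ v₂ → x ≠ v₃ →
      ∃ l, G.Adj x l ∧ (G.neighborSet l).ncard = 1 := by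
  intro x hx hx2 hx3
  by_contra! hstem
  obtain ⟨H, hHG, hHsupp, h1x, hxH⟩ :=
    exists_le_support_eq_compl_of_not_stem hiso h12 h23 h13 hd2 hd3 hx hx2 hx3 hstem
  obtain ⟨F, hFH, hF, hFsupp⟩ := H.exists_isStarForest_le_support_eq
  obtain ⟨w, hxw⟩ : x ∈ F.support := hFsupp ▸ h1x.mem_support_right
  have hx1 : F.Adj x v₁ := hxH w (hFH hxw) ▸ hxw
  have hc : F.IsStarCenter v₁ := hF.isStarCenter hx1.symm fun u hu => hxH u (hFH hu)
  obtain ⟨S₁, S₂, hS₁, hS₂, hne⟩ :=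
    exists_isStarFactor_ncard_edgeSet_ne (hFH.trans hHG) hF (hFsupp.trans hHsupp) hc h12 h23 h13
  exact hne (huniform S₁ S₂ hS₁ hS₂)

/-- If all star-factors of `G` have the same number of edges and `G` contains a triangle
`v₁v₂v₃` with `v₂, v₃` of degree two and `v₁` of degree at least three, then every
neighbor of `v₁` other than `v₂, v₃` is a stem. -/
theorem stmt_6 {V : Type*} [Fintype V] (G : SimpleGraph V)
    (huniform : ∀ S₁ S₂ : SimpleGraph V, IsStarFactor G S₁ → IsStarFactor G S₂ →
      S₁.edgeSet.ncard = S₂.edgeSet.ncard)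
    (v₁ v₂ v₃ : V)
    (h12 : G.Adj v₁ v₂) (h23 : G.Adj v₂ v₃) (h13 : G.Adj v₁ v₃)
    (hd2 : (G.neighborSet v₂).ncard = 2) (hd3 : (G.neighborSet v₃).ncard = 2)
    (hd1 : 3 ≤ (G.neighborSet v₁).ncard)
    (hiso : ∀ v, ∃ w, G.Adj v w) :
    ∀ x, G.Adj v₁ x → x ≠ v₂ → x ≠ v₃ →
      ∃ l, G.Adj x l ∧ (G.neighborSet l).ncard = 1 :=
  stmt_6_general G huniform v₁ v₂ v₃ h12 h23 h13 hd2 hd3 hiso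
end
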